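/- arXiv:1904.08476 — 2 statements merged into one kernel-verified Lean document; each statement's English description precedes it below -/
import Mathlib

section
/- Let σ* be the star subdivision of a cone σ with respect to v = Star(σ), and let ρ_v be the ray through v. A collection C of rays of σ* all distinct from ρ_v is a primitive collection of σ* if and only if the corresponding collection of rays in the star fan Star(ρ_v) is a primitive collection. -/
/-!
A ray `ρ ≠ ρ_v` of `σ*` is `cone {w}` with `w ∉ ℝ v`, and is a face of some `cone (μ ∪ {v})`
over a facet `μ` of `σ`. Since `v = ∑ uᵢ` lies in no proper face of `σ`, `v ∉ span μ`, so
`cone (μ ∪ {v})` is a pyramid with apex `v` and `cone (ρ ∪ {v})` is again one of its faces; its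
image in `N_ℝ / ℝ v` is the image of `ρ`, which is therefore a ray of `Star(ρ_v)`. The key point is
absorption: if `x ∈ σ`, `s ≥ 0` and `x + s • v` lies in a cone `τ` of `σ*`, then `x ∈ τ`. Hence
projection is injective on these rays, and a ray lies in a cone `τ ∋ v` of `σ*` as soon as its
image lies in the image of `τ`. As every cone of `σ*` lies in a maximal one, which contains `ρ_v`,
a subcollection of `C` lies in a common cone of `σ*` iff its image lies in a common cone of
`Star(ρ_v)`, and primitivity only depends on this.
-/

/-- The convex cone generated by a set `S ⊆ ℝⁿ`. -/
def coneGen {n : ℕ} (S : Set (Fin n → ℝ)) : Set (Fin n → ℝ) :=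
  {x | ∃ (t : Finset (Fin n → ℝ)) (c : (Fin n → ℝ) → ℝ),
    ↑t ⊆ S ∧ (∀ y, 0 ≤ c y) ∧ x = ∑ y ∈ t, c y • y}

/-- `τ` is a face of the cone `σ`. -/
def IsFaceOf {n : ℕ} (τ σ : Set (Fin n → ℝ)) : Prop :=
  τ ⊆ σ ∧ (∀ x ∈ τ, ∀ y ∈ τ, x + y ∈ τ) ∧ (∀ x ∈ τ, ∀ c : ℝ, 0 ≤ c → c • x ∈ τ) ∧
    (∀ x ∈ σ, ∀ y ∈ σ, x + y ∈ τ → x ∈ τ ∧ y ∈ τ)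

/-- `μ` is a facet of the full-dimensional cone `σ ⊆ ℝⁿ`. -/
def IsFacetOf {n : ℕ} (μ σ : Set (Fin n → ℝ)) : Prop :=
  IsFaceOf μ σ ∧ Module.finrank ℝ (Submodule.span ℝ μ) = n - 1

/-- The star subdivision `σ*` of the cone generated by `u`, with respect to `v`. -/
def starSubdiv {n k : ℕ} (u : Fin k → (Fin n → ℝ)) (v : Fin n → ℝ) :
    Set (Set (Fin n → ℝ)) :=
  {τ | ∃ μ : Set (Fin n → ℝ), IsFacetOf μ (coneGen (Set.range u)) ∧
    IsFaceOf τ (coneGen (μ ∪ {v}))}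

/-- The rays (one-dimensional cones) of a fan `F`, in any real vector space. -/
def raysOf {V : Type*} [AddCommGroup V] [Module ℝ V] (F : Set (Set V)) : Set (Set V) :=
  {ρ ∈ F | Module.finrank ℝ (Submodule.span ℝ ρ) = 1}

/-- A primitive collection of a fan `F`: a collection `C` of rays of `F` not all contained
in a single cone of `F`, every proper subcollection of which is contained in some cone
of `F`. -/
def IsPrimitiveCollection {V : Type*} [AddCommGroup V] [Module ℝ V]
    (F : Set (Set V)) (C : Set (Set V)) : Prop :=
  C ⊆ raysOf F ∧ ¬(∃ σ ∈ F, ∀ ρ ∈ C, ρ ⊆ σ) ∧ (∀ D ⊂ C, ∃ σ ∈ F, ∀ ρ ∈ D, ρ ⊆ σ)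

/-- The star fan `Star(ρ_v)` of the ray through `v` in the star subdivision: the fan in
`N_ℝ/⟨v⟩` consisting of the images of the cones of `σ*` containing `ρ_v`. -/
def starFanOf {n k : ℕ} (u : Fin k → (Fin n → ℝ)) (v : Fin n → ℝ) :
    Set (Set ((Fin n → ℝ) ⧸ Submodule.span ℝ {v})) :=
  {w | ∃ τ ∈ starSubdiv u v, coneGen {v} ⊆ τ ∧ w = (Submodule.span ℝ {v}).mkQ '' τ}

section PrimitiveCollection

variable {V W : Type*} [AddCommGroup V] [Module ℝ V] [AddCommGroup W] [Module ℝ W]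

theorem isPrimitiveCollection_image_iff {F : Set (Set V)} {G : Set (Set W)} {f : Set V → Set W}
    {C : Set (Set V)} (hC : C ⊆ raysOf F) (hCG : ∀ ρ ∈ C, f ρ ∈ raysOf G) (hf : C.InjOn f)
    (hFG : ∀ τ ∈ F, ∃ ω ∈ G, ∀ ρ ∈ C, ρ ⊆ τ → f ρ ⊆ ω)
    (hGF : ∀ ω ∈ G, ∃ τ ∈ F, ∀ ρ ∈ C, f ρ ⊆ ω → ρ ⊆ τ) :
    IsPrimitiveCollection F C ↔ IsPrimitiveCollection G (f '' C) := by
  have hcover : ∀ D ⊆ C, (∃ τ ∈ F, ∀ ρ ∈ D, ρ ⊆ τ) ↔ ∃ ω ∈ G, ∀ ρ' ∈ f '' D, ρ' ⊆ ω := by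
    intro D hD
    constructor
    · rintro ⟨τ, hτ, hDτ⟩
      obtain ⟨ω, hω, hτω⟩ := hFG τ hτ
      exact ⟨ω, hω, Set.forall_mem_image.2 fun ρ hρ => hτω ρ (hD hρ) (hDτ ρ hρ)⟩
    · rintro ⟨ω, hω, hDω⟩
      obtain ⟨τ, hτ, hωτ⟩ := hGF ω hω
      exact ⟨τ, hτ, fun ρ hρ => hωτ ρ (hD hρ) (hDω _ (Set.mem_image_of_mem f hρ))⟩
  have hfC : f '' C ⊆ raysOf G := Set.forall_mem_image.2 hCG
  simp only [IsPrimitiveCollection, hC, hfC, true_and, hcover C subset_rfl]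
  refine and_congr_right fun _ => ⟨fun h D' hD' => ?_, fun h D hD => ?_⟩
  · obtain ⟨D, hDC, rfl⟩ := Set.subset_image_iff.1 hD'.1
    exact (hcover D hDC).1 (h D ((hf.image_ssubset_image_iff hDC subset_rfl).1 hD'))
  · exact (hcover D hD.1).2 (h _ ((hf.image_ssubset_image_iff hD.1 subset_rfl).2 hD))

end PrimitiveCollection

open Submodule

section Cones

variable {E : Type*} [AddCommGroup E] [Module ℝ E]

theorem PointedCone.mem_hull_singleton {v x : E} :
    x ∈ PointedCone.hull ℝ {v} ↔ ∃ c : ℝ, 0 ≤ c ∧ x = c • v := by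
  rw [PointedCone.hull, mem_span_singleton]
  constructor
  · rintro ⟨a, rfl⟩
    exact ⟨a, a.2, rfl⟩
  · rintro ⟨c, hc, rfl⟩
    exact ⟨⟨c, hc⟩, rfl⟩

theorem PointedCone.mem_hull_union_singleton {s : Set E} {v x : E} :
    x ∈ PointedCone.hull ℝ (s ∪ {v}) ↔
      ∃ m ∈ PointedCone.hull ℝ s, ∃ c : ℝ, 0 ≤ c ∧ x = m + c • v := by
  rw [PointedCone.hull, span_union, mem_sup]
  constructor
  · rintro ⟨m, hm, z, hz, rfl⟩
    obtain ⟨c, hc, rfl⟩ := PointedCone.mem_hull_singleton.1 hz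
    exact ⟨m, hm, c, hc, rfl⟩
  · rintro ⟨m, hm, c, hc, rfl⟩
    exact ⟨m, hm, c • v, PointedCone.mem_hull_singleton.2 ⟨c, hc, rfl⟩, rfl⟩

theorem PointedCone.exists_sub_of_mem_span {C : PointedCone ℝ E} {x : E}
    (hx : x ∈ span ℝ (C : Set E)) : ∃ p ∈ C, ∃ q ∈ C, x = p - q := by
  induction hx using span_induction with
  | mem z hz => exact ⟨z, hz, 0, C.zero_mem, (sub_zero z).symm⟩
  | zero => exact ⟨0, C.zero_mem, 0, C.zero_mem, (sub_zero 0).symm⟩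
  | add _ _ _ _ hx hy =>
    obtain ⟨p, hp, q, hq, rfl⟩ := hx
    obtain ⟨p', hp', q', hq', rfl⟩ := hy
    exact ⟨p + p', C.add_mem hp hp', q + q', C.add_mem hq hq', by abel⟩
  | smul c _ _ hx =>
    obtain ⟨p, hp, q, hq, rfl⟩ := hx
    rcases le_total 0 c with hc | hc
    · exact ⟨c • p, C.smul_mem hc hp, c • q, C.smul_mem hc hq, smul_sub c p q⟩
    · refine ⟨(-c) • q, C.smul_mem (neg_nonneg.2 hc) hq, (-c) • p,
        C.smul_mem (neg_nonneg.2 hc) hp, ?_⟩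
      rw [smul_sub, neg_smul, neg_smul, neg_sub_neg]

end Cones

section ConeGen

variable {n : ℕ}

theorem coneGen_eq_hull (S : Set (Fin n → ℝ)) : coneGen S = PointedCone.hull ℝ S := by
  ext x
  constructor
  · rintro ⟨t, c, htS, hc, rfl⟩
    exact sum_mem fun y hy => PointedCone.smul_mem _ (hc y) (PointedCone.subset_hull (htS hy))
  · intro hx
    obtain ⟨c, hcS, hc, rfl⟩ := PointedCone.mem_hull_set.1 hx
    exact ⟨c.support, c, hcS, hc, rfl⟩

theorem coneGen_mono {S T : Set (Fin n → ℝ)} (h : S ⊆ T) : coneGen S ⊆ coneGen T := by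
  rw [coneGen_eq_hull, coneGen_eq_hull]
  exact span_mono h

theorem subset_coneGen (S : Set (Fin n → ℝ)) : S ⊆ coneGen S := by
  rw [coneGen_eq_hull]
  exact PointedCone.subset_hull

theorem coneGen_subset_iff {S T : Set (Fin n → ℝ)} : coneGen S ⊆ coneGen T ↔ S ⊆ coneGen T := by
  refine ⟨(subset_coneGen S).trans, fun h => ?_⟩
  rw [coneGen_eq_hull S, coneGen_eq_hull T] at *
  exact span_le.2 h

theorem span_coneGen (S : Set (Fin n → ℝ)) : span ℝ (coneGen S) = span ℝ S := by
  rw [coneGen_eq_hull, PointedCone.hull, span_span_of_tower]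

theorem smul_mem_coneGen {S : Set (Fin n → ℝ)} {x : Fin n → ℝ} (hx : x ∈ coneGen S) {c : ℝ}
    (hc : 0 ≤ c) : c • x ∈ coneGen S := by
  rw [coneGen_eq_hull] at hx ⊢
  exact PointedCone.smul_mem _ hc hx

theorem mem_coneGen_singleton {w x : Fin n → ℝ} :
    x ∈ coneGen {w} ↔ ∃ c : ℝ, 0 ≤ c ∧ x = c • w := by
  rw [coneGen_eq_hull, SetLike.mem_coe, PointedCone.mem_hull_singleton]

theorem coneGen_singleton_eq_of_mem {w x : Fin n → ℝ} (hx : x ∈ coneGen {w}) (hx0 : x ≠ 0) :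
    coneGen {x} = coneGen {w} := by
  obtain ⟨c, hc, rfl⟩ := mem_coneGen_singleton.1 hx
  have hc0 : 0 < c := hc.lt_of_ne' fun h => hx0 (by rw [h, zero_smul])
  ext y
  simp only [mem_coneGen_singleton, smul_smul]
  constructor
  · rintro ⟨d, hd, rfl⟩
    exact ⟨d * c, mul_nonneg hd hc, rfl⟩
  · rintro ⟨d, hd, rfl⟩
    exact ⟨d / c, div_nonneg hd hc, by rw [div_mul_cancel₀ d hc0.ne']⟩

theorem mkQ_image_coneGen_union_singleton (S : Set (Fin n → ℝ)) (v : Fin n → ℝ) :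
    (span ℝ {v}).mkQ '' coneGen (S ∪ {v}) = (span ℝ {v}).mkQ '' coneGen S := by
  refine (Set.image_subset_iff.2 fun x hx => ?_).antisymm
    (Set.image_mono (coneGen_mono Set.subset_union_left))
  rw [coneGen_eq_hull, SetLike.mem_coe, PointedCone.mem_hull_union_singleton] at hx
  obtain ⟨m, hm, c, -, rfl⟩ := hx
  refine ⟨m, by rwa [coneGen_eq_hull], ?_⟩
  rw [map_add, map_smul, mkQ_apply (span ℝ {v}) v,
    (Quotient.mk_eq_zero _).2 (mem_span_singleton_self v), smul_zero, add_zero]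

theorem isFaceOf_self (C : PointedCone ℝ (Fin n → ℝ)) : IsFaceOf (C : Set (Fin n → ℝ)) C :=
  ⟨subset_rfl, fun _ hx _ hy => C.add_mem hx hy, fun _ hx _ hc => C.smul_mem hc hx,
    fun _ hx _ hy _ => ⟨hx, hy⟩⟩

theorem IsFaceOf.hull_subset_insert_zero {μ σ : Set (Fin n → ℝ)} (hμ : IsFaceOf μ σ) :
    (PointedCone.hull ℝ μ : Set (Fin n → ℝ)) ⊆ insert 0 μ := by
  intro x hx
  induction hx using span_induction with
  | mem z hz => exact Or.inr hz
  | zero => exact Or.inl rfl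
  | add x y _ _ hx hy =>
    rcases hx with rfl | hx
    · rwa [zero_add]
    rcases hy with rfl | hy
    · rw [add_zero]
      exact Or.inr hx
    exact Or.inr (hμ.2.1 x hx y hy)
  | smul c x _ hx =>
    rcases hx with rfl | hx
    · exact Or.inl (smul_zero c)
    · exact Or.inr (hμ.2.2.1 x hx c c.2)

theorem IsFaceOf.hull {μ S : Set (Fin n → ℝ)} (hS : ∀ x ∈ coneGen S, -x ∈ coneGen S → x = 0)
    (hμ : IsFaceOf μ (coneGen S)) :
    IsFaceOf (PointedCone.hull ℝ μ : Set (Fin n → ℝ)) (coneGen S) := by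
  rw [coneGen_eq_hull] at hS hμ ⊢
  refine ⟨span_le.2 hμ.1, fun _ hx _ hy => add_mem hx hy,
    fun _ hx c hc => PointedCone.smul_mem _ hc hx, fun x hx y hy hxy => ?_⟩
  rcases hμ.hull_subset_insert_zero hxy with hxy | hxy
  · have hx0 : x = 0 := hS x hx (by rwa [← eq_neg_of_add_eq_zero_right hxy])
    subst hx0
    rw [zero_add] at hxy
    exact ⟨zero_mem _, hxy ▸ zero_mem _⟩
  · have := hμ.2.2.2 x hx y hy hxy
    exact ⟨PointedCone.subset_hull this.1, PointedCone.subset_hull this.2⟩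

theorem IsFaceOf.coneGen_union_singleton {μ S : Set (Fin n → ℝ)} {v : Fin n → ℝ}
    (hvμ : v ∉ span ℝ μ)
    (hS : IsFaceOf (coneGen S) (coneGen (μ ∪ {v}))) (hvS : v ∉ coneGen S) :
    IsFaceOf (coneGen (S ∪ {v})) (coneGen (μ ∪ {v})) := by
  simp only [coneGen_eq_hull, SetLike.mem_coe] at hS hvS ⊢
  have hμK : ∀ m ∈ PointedCone.hull ℝ μ, m ∈ PointedCone.hull ℝ (μ ∪ {v}) :=
    fun m hm => span_mono Set.subset_union_left hm
  have hvK : ∀ c : ℝ, 0 ≤ c → c • v ∈ PointedCone.hull ℝ (μ ∪ {v}) := fun c hc =>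
    PointedCone.mem_hull_union_singleton.2 ⟨0, zero_mem _, c, hc, (zero_add _).symm⟩
  have hSμ : ∀ r ∈ PointedCone.hull ℝ S, r ∈ PointedCone.hull ℝ μ := by
    intro r hr
    obtain ⟨m, hm, d, hd, rfl⟩ := PointedCone.mem_hull_union_singleton.1 (hS.1 hr)
    have hdS := (hS.2.2.2 m (hμK m hm) _ (hvK d hd) hr).2
    rcases hd.eq_or_lt with rfl | hd
    · rwa [zero_smul, add_zero]
    · exact absurd ((PointedCone.smul_mem_iff _ hd).1 hdS) hvS
  refine ⟨span_le.2 (Set.union_subset (PointedCone.subset_hull.trans hS.1)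
      (Set.singleton_subset_iff.2 (by simpa using hvK 1))),
    fun _ hx _ hy => add_mem hx hy, fun _ hx _ hc => PointedCone.smul_mem _ hc hx, ?_⟩
  intro x hx y hy hxy
  obtain ⟨m₁, hm₁, a, ha, rfl⟩ := PointedCone.mem_hull_union_singleton.1 hx
  obtain ⟨m₂, hm₂, b, hb, rfl⟩ := PointedCone.mem_hull_union_singleton.1 hy
  obtain ⟨r, hr, c, -, hrc⟩ := PointedCone.mem_hull_union_singleton.1 hxy
  have hcoef : a + b - c = 0 := by
    by_contra hne
    refine hvμ ((smul_mem_iff _ hne).1 ?_)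
    have hspan := PointedCone.hull_le_span ℝ μ
    rw [show (a + b - c) • v = r - m₁ - m₂ by linear_combination (norm := module) hrc]
    exact sub_mem (sub_mem (hspan (hSμ r hr)) (hspan hm₁)) (hspan hm₂)
  have hm : m₁ + m₂ ∈ PointedCone.hull ℝ S := by
    rwa [show m₁ + m₂ = r by linear_combination (norm := module) hrc - hcoef • v]
  obtain ⟨hm₁S, hm₂S⟩ := hS.2.2.2 m₁ (hμK m₁ hm₁) m₂ (hμK m₂ hm₂) hm
  exact ⟨PointedCone.mem_hull_union_singleton.2 ⟨m₁, hm₁S, a, ha, rfl⟩,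
    PointedCone.mem_hull_union_singleton.2 ⟨m₂, hm₂S, b, hb, rfl⟩⟩

end ConeGen

section StarSubdivision

variable {n k : ℕ} {u : Fin k → Fin n → ℝ} {v : Fin n → ℝ}

theorem sum_mem_coneGen_range : ∑ i, u i ∈ coneGen (Set.range u) := by
  rw [coneGen_eq_hull]
  exact sum_mem fun i _ => PointedCone.subset_hull (Set.mem_range_self i)

theorem subset_coneGen_range_of_mem_starSubdiv (hv : v = ∑ i, u i) {τ : Set (Fin n → ℝ)}
    (hτ : τ ∈ starSubdiv u v) : τ ⊆ coneGen (Set.range u) := by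
  obtain ⟨μ, hμ, hτK⟩ := hτ
  refine hτK.1.trans (coneGen_subset_iff.2 (Set.union_subset hμ.1.1 ?_))
  rw [Set.singleton_subset_iff, hv]
  exact sum_mem_coneGen_range

theorem coneGen_union_singleton_mem_starSubdiv {μ : Set (Fin n → ℝ)}
    (hμ : IsFacetOf μ (coneGen (Set.range u))) : coneGen (μ ∪ {v}) ∈ starSubdiv u v := by
  refine ⟨μ, hμ, ?_⟩
  rw [coneGen_eq_hull]
  exact isFaceOf_self _

theorem exists_eq_coneGen_singleton_of_mem_raysOf
    (hsc : ∀ x ∈ coneGen (Set.range u), -x ∈ coneGen (Set.range u) → x = 0) (hv : v = ∑ i, u i)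
    {ρ : Set (Fin n → ℝ)}
    (hρ : ρ ∈ raysOf (starSubdiv u v)) : ∃ w ≠ 0, ρ = coneGen {w} := by
  have hρσ := subset_coneGen_range_of_mem_starSubdiv hv hρ.1
  obtain ⟨⟨μ, -, hρK⟩, hrank⟩ := hρ
  obtain ⟨w, hwρ, hw0⟩ : ∃ w ∈ ρ, w ≠ 0 := by
    by_contra! h
    rw [span_eq_bot.2 h, finrank_bot] at hrank
    exact zero_ne_one hrank
  have hspan : span ℝ {w} = span ℝ ρ := eq_of_le_of_finrank_le
    (span_mono (Set.singleton_subset_iff.2 hwρ)) (by rw [hrank, finrank_span_singleton hw0])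
  refine ⟨w, hw0, Set.ext fun x => ⟨fun hx => ?_, fun hx => ?_⟩⟩
  · obtain ⟨c, rfl⟩ := mem_span_singleton.1 (hspan ▸ subset_span hx : x ∈ span ℝ {w})
    rcases le_total 0 c with hc | hc
    · exact mem_coneGen_singleton.2 ⟨c, hc, rfl⟩
    · -- `c • w` and `-(c • w)` both lie in the strongly convex cone `σ`
      rw [hsc _ (hρσ hx) (by simpa using smul_mem_coneGen (hρσ hwρ) (neg_nonneg.2 hc))]
      exact mem_coneGen_singleton.2 ⟨0, le_rfl, (zero_smul ℝ w).symm⟩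
  · obtain ⟨c, hc, rfl⟩ := mem_coneGen_singleton.1 hx
    exact hρK.2.2.1 w hwρ c hc

variable (hsc : ∀ x ∈ coneGen (Set.range u), -x ∈ coneGen (Set.range u) → x = 0)
  (hfull : Submodule.span ℝ (Set.range u) = ⊤) (hv : v = ∑ i, u i)
include hsc hfull hv

theorem notMem_hull_of_isFacetOf (hn : 0 < n) {μ : Set (Fin n → ℝ)}
    (hμ : IsFacetOf μ (coneGen (Set.range u))) : v ∉ PointedCone.hull ℝ μ := by
  intro hvμ
  have hface := hμ.1.hull hsc
  rw [coneGen_eq_hull] at hface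
  -- `v = ∑ i, u i` lies in the face `hull μ`, hence so does every `u j`, and `μ` spans everything
  have hu : Set.range u ⊆ span ℝ μ := by
    rintro _ ⟨j, rfl⟩
    have hsum : u j + ∑ i ∈ Finset.univ.erase j, u i = v := by
      rw [hv, Finset.add_sum_erase _ _ (Finset.mem_univ j)]
    have huj := (hface.2.2.2 (u j) (PointedCone.subset_hull (Set.mem_range_self j)) _
      (sum_mem fun i _ => PointedCone.subset_hull (Set.mem_range_self i)) (hsum ▸ hvμ)).1
    exact PointedCone.hull_le_span ℝ μ huj
  have hrank := hμ.2
  rw [top_le_iff.1 (hfull.symm.trans_le (span_le.2 hu)), finrank_top,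
    Module.finrank_fin_fun] at hrank
  omega

theorem notMem_span_of_isFacetOf (hn : 0 < n) {μ : Set (Fin n → ℝ)}
    (hμ : IsFacetOf μ (coneGen (Set.range u))) : v ∉ span ℝ μ := by
  intro hvμ
  rw [← span_coneGen, coneGen_eq_hull] at hvμ
  obtain ⟨p, hp, q, hq, rfl⟩ := PointedCone.exists_sub_of_mem_span hvμ
  have hface := hμ.1.hull hsc
  have hvσ : p - q ∈ coneGen (Set.range u) := hv ▸ sum_mem_coneGen_range
  refine notMem_hull_of_isFacetOf hsc hfull hv hn hμ
    (hface.2.2.2 _ hvσ q (hface.1 hq) (by rwa [sub_add_cancel])).1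

theorem mem_of_add_smul_mem_of_mem_starSubdiv (hn : 0 < n) {τ : Set (Fin n → ℝ)}
    (hτ : τ ∈ starSubdiv u v) {x : Fin n → ℝ} {s : ℝ} (hx : x ∈ coneGen (Set.range u))
    (hs : 0 ≤ s) (h : x + s • v ∈ τ) : x ∈ τ := by
  obtain ⟨μ, hμ, hτK⟩ := hτ
  have hxK := hτK.1 h
  rw [coneGen_eq_hull, SetLike.mem_coe, PointedCone.mem_hull_union_singleton] at hxK
  obtain ⟨m, hm, c, hc, hmc⟩ := hxK
  rcases le_or_gt s c with hle | hlt
  · have hK : ∀ m' ∈ PointedCone.hull ℝ μ, ∀ c' : ℝ, 0 ≤ c' → m' + c' • v ∈ coneGen (μ ∪ {v}) :=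
      fun m' hm' c' hc' => by
        rw [coneGen_eq_hull]
        exact PointedCone.mem_hull_union_singleton.2 ⟨m', hm', c', hc', rfl⟩
    have hxK : x ∈ coneGen (μ ∪ {v}) := by
      rw [show x = m + (c - s) • v by linear_combination (norm := module) hmc]
      exact hK m hm _ (sub_nonneg.2 hle)
    have hsv : s • v ∈ coneGen (μ ∪ {v}) := by simpa using hK 0 (zero_mem _) s hs
    exact (hτK.2.2.2 x hxK _ hsv h).1
  · -- otherwise `x + (s - c) • v` lies in the face `hull μ` of `σ`, forcing `v ∈ hull μ`
    have hface := hμ.1.hull hsc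
    have hvσ : (s - c) • v ∈ coneGen (Set.range u) :=
      smul_mem_coneGen (hv ▸ sum_mem_coneGen_range) (sub_nonneg.2 hlt.le)
    have hxm : x + (s - c) • v = m := by linear_combination (norm := module) hmc
    have hvμ := (hface.2.2.2 x hx _ hvσ (hxm ▸ hm)).2
    rw [SetLike.mem_coe, PointedCone.smul_mem_iff _ (sub_pos.2 hlt)] at hvμ
    exact absurd hvμ (notMem_hull_of_isFacetOf hsc hfull hv hn hμ)

theorem exists_generator_of_mem_raysOf_diff {ρ : Set (Fin n → ℝ)}
    (hρ : ρ ∈ raysOf (starSubdiv u v) \ {coneGen {v}}) :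
    ∃ w, ρ = coneGen {w} ∧ v ∉ ρ ∧ w ∉ span ℝ {v} := by
  obtain ⟨w, hw0, rfl⟩ := exists_eq_coneGen_singleton_of_mem_raysOf hsc hv hρ.1
  obtain ⟨i, -⟩ := Function.ne_iff.1 hw0
  obtain ⟨μ, hμ, -⟩ := hρ.1.1
  have hv0 : v ≠ 0 := fun h => notMem_span_of_isFacetOf hsc hfull hv i.pos hμ (h ▸ zero_mem _)
  have hvρ : v ∉ coneGen {w} := fun h => hρ.2 (coneGen_singleton_eq_of_mem h hv0).symm
  refine ⟨w, rfl, hvρ, fun hw => ?_⟩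
  obtain ⟨a, rfl⟩ := mem_span_singleton.1 hw
  rcases le_or_gt a 0 with ha | ha
  · have hvσ : v ∈ coneGen (Set.range u) := hv ▸ sum_mem_coneGen_range
    refine hw0 (hsc _ (subset_coneGen_range_of_mem_starSubdiv hv hρ.1.1 (subset_coneGen _ rfl)) ?_)
    simpa using smul_mem_coneGen hvσ (neg_nonneg.2 ha)
  · refine hvρ (mem_coneGen_singleton.2 ⟨a⁻¹, inv_nonneg.2 ha.le, ?_⟩)
    rw [smul_smul, inv_mul_cancel₀ ha.ne', one_smul]

theorem subset_of_mkQ_image_subset {ρ τ : Set (Fin n → ℝ)}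
    (hρ : ρ ∈ raysOf (starSubdiv u v) \ {coneGen {v}}) (hτ : τ ∈ starSubdiv u v)
    (hvτ : coneGen {v} ⊆ τ) (h : (span ℝ {v}).mkQ '' ρ ⊆ (span ℝ {v}).mkQ '' τ) : ρ ⊆ τ := by
  obtain ⟨w, rfl, -, hwv⟩ := exists_generator_of_mem_raysOf_diff hsc hfull hv hρ
  obtain ⟨i, -⟩ := Function.ne_iff.1 fun h : w = 0 => hwv (h ▸ zero_mem _)
  have hwσ := subset_coneGen_range_of_mem_starSubdiv hv hρ.1.1 (subset_coneGen _ rfl)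
  obtain ⟨t, htτ, htw⟩ := h ⟨w, subset_coneGen _ rfl, rfl⟩
  obtain ⟨a, ha⟩ := mem_span_singleton.1 ((Submodule.Quotient.eq _).1 htw)
  obtain ⟨μ, hμ, hτK⟩ := hτ
  have hwτ : w ∈ τ := by
    rcases le_total 0 a with ha0 | ha0
    · refine mem_of_add_smul_mem_of_mem_starSubdiv hsc hfull hv i.pos ⟨μ, hμ, hτK⟩ hwσ ha0 ?_
      rwa [ha, add_sub_cancel]
    · rw [show w = t + (-a) • v by rw [neg_smul, ha, neg_sub, add_sub_cancel]]
      exact hτK.2.1 _ htτ _ (hτK.2.2.1 v (hvτ (subset_coneGen _ rfl)) _ (neg_nonneg.2 ha0))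
  intro x hx
  obtain ⟨c, hc, rfl⟩ := mem_coneGen_singleton.1 hx
  exact hτK.2.2.1 w hwτ c hc

theorem mkQ_image_injOn :
    Set.InjOn ((span ℝ {v}).mkQ '' ·) (raysOf (starSubdiv u v) \ {coneGen {v}}) := by
  intro ρ hρ ρ' hρ' h
  obtain ⟨w, rfl, -, hwv⟩ := exists_generator_of_mem_raysOf_diff hsc hfull hv hρ
  obtain ⟨w', rfl, -, -⟩ := exists_generator_of_mem_raysOf_diff hsc hfull hv hρ'
  have hw0 : w ≠ 0 := fun h => hwv (h ▸ zero_mem _)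
  obtain ⟨i, -⟩ := Function.ne_iff.1 hw0
  replace h : (span ℝ {v}).mkQ '' coneGen {w} = (span ℝ {v}).mkQ '' coneGen {w'} := h
  obtain ⟨x, hx, hxw⟩ := h ▸ Set.mem_image_of_mem (span ℝ {v}).mkQ (subset_coneGen {w} rfl)
  obtain ⟨a, ha⟩ := mem_span_singleton.1 ((Submodule.Quotient.eq _).1 hxw)
  rcases le_total 0 a with ha0 | ha0
  · have hw : w ∈ coneGen {w'} := by
      refine mem_of_add_smul_mem_of_mem_starSubdiv hsc hfull hv i.pos hρ'.1.1
        (subset_coneGen_range_of_mem_starSubdiv hv hρ.1.1 (subset_coneGen _ rfl)) ha0 ?_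
      rwa [ha, add_sub_cancel]
    exact coneGen_singleton_eq_of_mem hw hw0
  · have hxρ : x ∈ coneGen {w} := by
      refine mem_of_add_smul_mem_of_mem_starSubdiv hsc hfull hv i.pos hρ.1.1
        (subset_coneGen_range_of_mem_starSubdiv hv hρ'.1.1 hx) (neg_nonneg.2 ha0) ?_
      rw [neg_smul, ha, neg_sub, add_sub_cancel]
      exact subset_coneGen _ rfl
    have hx0 : x ≠ 0 := by
      rintro rfl
      exact hwv (mem_span_singleton.2 ⟨-a, by rw [neg_smul, ha, zero_sub, neg_neg]⟩)
    exact (coneGen_singleton_eq_of_mem hxρ hx0).symm.trans (coneGen_singleton_eq_of_mem hx hx0)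

theorem mkQ_image_mem_raysOf_starFanOf {ρ : Set (Fin n → ℝ)}
    (hρ : ρ ∈ raysOf (starSubdiv u v) \ {coneGen {v}}) :
    (span ℝ {v}).mkQ '' ρ ∈ raysOf (starFanOf u v) := by
  obtain ⟨w, rfl, hvρ, hwv⟩ := exists_generator_of_mem_raysOf_diff hsc hfull hv hρ
  obtain ⟨i, -⟩ := Function.ne_iff.1 fun h : w = 0 => hwv (h ▸ zero_mem _)
  obtain ⟨μ, hμ, hρK⟩ := hρ.1.1
  have hτK := hρK.coneGen_union_singleton (notMem_span_of_isFacetOf hsc hfull hv i.pos hμ) hvρ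
  refine ⟨⟨_, ⟨μ, hμ, hτK⟩, coneGen_mono Set.subset_union_right,
    (mkQ_image_coneGen_union_singleton {w} v).symm⟩, ?_⟩
  rw [span_image, span_coneGen, ← span_image, Set.image_singleton]
  exact finrank_span_singleton fun h => hwv ((Submodule.Quotient.mk_eq_zero _).1 h)

end StarSubdivision

theorem stmt_2_general {n k : ℕ} (u : Fin k → (Fin n → ℝ))
    (σ : Set (Fin n → ℝ)) (hσ : σ = coneGen (Set.range u))
    (hfull : Submodule.span ℝ (Set.range u) = ⊤)
    (hstronglyconvex : ∀ x ∈ σ, -x ∈ σ → x = 0)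
    (v : Fin n → ℝ) (hv : v = ∑ i, u i)
    (C : Set (Set (Fin n → ℝ)))
    (hC : C ⊆ raysOf (starSubdiv u v)) (hCv : coneGen {v} ∉ C) :
    IsPrimitiveCollection (starSubdiv u v) C ↔
      IsPrimitiveCollection (starFanOf u v)
        ((fun ρ => (Submodule.span ℝ {v}).mkQ '' ρ) '' C) := by
  subst hσ
  have hC' : C ⊆ raysOf (starSubdiv u v) \ {coneGen {v}} :=
    fun ρ hρ => ⟨hC hρ, fun h => hCv (h ▸ hρ)⟩
  refine isPrimitiveCollection_image_iff hC
    (fun ρ hρ => mkQ_image_mem_raysOf_starFanOf hstronglyconvex hfull hv (hC' hρ))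
    ((mkQ_image_injOn hstronglyconvex hfull hv).mono hC') ?_ ?_
  · rintro τ ⟨μ, hμ, hτK⟩
    exact ⟨_, ⟨_, coneGen_union_singleton_mem_starSubdiv hμ, coneGen_mono Set.subset_union_right,
      rfl⟩, fun ρ _ hρτ => Set.image_mono (hρτ.trans hτK.1)⟩
  · rintro _ ⟨τ, hτ, hvτ, rfl⟩
    exact ⟨τ, hτ, fun ρ hρ =>
      subset_of_mkQ_image_subset hstronglyconvex hfull hv (hC' hρ) hτ hvτ⟩

/-- Let `σ*` be the star subdivision of a cone `σ` with respect to
`v = Star(σ)`, and let `ρ_v` be the ray through `v`.  A collection `C` of rays of `σ*`,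
all distinct from `ρ_v`, is a primitive collection of `σ*` if and only if the
corresponding collection of rays (the images under `N_ℝ → N_ℝ/⟨v⟩`) in the star fan
`Star(ρ_v)` is a primitive collection. -/
theorem stmt_2 {n k : ℕ} (u : Fin k → (Fin n → ℝ)) (hu : ∀ i, u i ≠ 0)
    (σ : Set (Fin n → ℝ)) (hσ : σ = coneGen (Set.range u))
    (hfull : Submodule.span ℝ (Set.range u) = ⊤)
    (hstronglyconvex : ∀ x ∈ σ, -x ∈ σ → x = 0)
    (v : Fin n → ℝ) (hv : v = ∑ i, u i)
    (C : Set (Set (Fin n → ℝ)))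
    (hC : C ⊆ raysOf (starSubdiv u v)) (hCv : coneGen {v} ∉ C) :
    IsPrimitiveCollection (starSubdiv u v) C ↔
      IsPrimitiveCollection (starFanOf u v)
        ((fun ρ => (Submodule.span ℝ {v}).mkQ '' ρ) '' C) :=
  stmt_2_general u σ hσ hfull hstronglyconvex v hv C hC hCv
end

section
/- If f: X' → X is an envelope of schemes, then the proper pushforward f_*: A_*(X') → A_*(X) on Chow groups is surjective. -/
/-- If `f : X' → X` is an envelope of schemes, then the proper pushforward
`f_* : A_*(X') → A_*(X)` on Chow groups is surjective.

Formalization: `VX` (resp. `VX'`) is the set of closed subvarieties of `X` (resp. `X'`),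
`cl`/`cl'` their cycle classes, which generate the Chow groups `AX`/`AX'` as abelian groups;
`f` is the proper pushforward homomorphism.  The envelope condition supplies, for each
closed subvariety `V ⊆ X`, a closed subvariety `V' ⊆ X'` mapping birationally onto `V`, so
that `f_*[V'] = [V]`.  Conclusion: `f_*` is surjective. -/
theorem stmt_11 {VX VX' AX AX' : Type*} [AddCommGroup AX] [AddCommGroup AX']
    (cl : VX → AX) (cl' : VX' → AX')
    (hgen : AddSubgroup.closure (Set.range cl) = ⊤)
    (hgen' : AddSubgroup.closure (Set.range cl') = ⊤)
    (f : AX' →+ AX)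
    (henvelope : ∀ V : VX, ∃ V' : VX', f (cl' V') = cl V) :
    Function.Surjective f := by
  rw [←  AddMonoidHom.range_eq_top, eq_top_iff, ← hgen,
    AddSubgroup.closure_le]
  rintro _ ⟨V, rfl⟩
  obtain ⟨V', hV'⟩ := henvelope V
  exact ⟨cl' V', hV'⟩
end
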